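/- arXiv:1106.4468 — 4 statements merged into one kernel-verified Lean document; each statement's English description precedes it below -/
import Mathlib

section
/- The function c₁(x) = -(1/18)x⁴ + b·x³ - (1/36)x², for any real parameter b, satisfies the recursion c₁(x+1) = (2 + 6/x²)·c₁(x) - c₁(x-1) - x²/3 for all integers x ≥ 1. -/
/-- The function `c₁(x) = -(1/18)x⁴ + b·x³ - (1/36)x²` satisfies, for every real
parameter `b`, the recursion `c₁(x+1) = (2 + 6/x²)·c₁(x) - c₁(x-1) - x²/3` for all
integers `x ≥ 1`. -/
theorem c1_recursion (b : ℝ) :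
    ∀ x : ℕ, 1 ≤ x →
      (fun x : ℕ => -(1/18) * (x:ℝ)^4 + b * (x:ℝ)^3 - (1/36) * (x:ℝ)^2) (x + 1)
        = (2 + 6 / (x:ℝ)^2) *
            (fun x : ℕ => -(1/18) * (x:ℝ)^4 + b * (x:ℝ)^3 - (1/36) * (x:ℝ)^2) x
          - (fun x : ℕ => -(1/18) * (x:ℝ)^4 + b * (x:ℝ)^3 - (1/36) * (x:ℝ)^2) (x - 1)
          - (x:ℝ)^2 / 3 := by
  rintro x hx
  obtain ⟨y, rfl⟩ := Nat.exists_eq_add_of_le hx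
  simp only [Nat.add_sub_cancel_left, Nat.add_sub_cancel]
  have hy : ((1 + y : ℕ) : ℝ) = y + 1 := by push_cast; ring
  have hne : ((1 + y : ℕ) : ℝ) ≠ 0 := by positivity
  push_cast
  field_simp
  ring
end

section
/- Invariance of total weights under rotor-routing: let G be a locally finite graph with rotor sequences, h: G → ℝ a weight function, and define particle weights W_P(t) = ∑_x σ_t(x)h(x) and rotor weights W_R(t) = ∑_x w(x, u_t(x)) where w(x,0) = 0 and w(x,k) = w(x,k-1) + h(x) - h(x_{k mod d(x)}). Then for all times t, t' ≥ 0, W_P(t) + W_R(t) = W_P(t') + W_R(t'). -/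
/-!
A routing step moves one particle from `a` to the new rotor target `b` of `a`, so the particle
weight changes by `h b - h a`; the only emission counter that moves is the one at `a`, so by the
recursion for `w` the rotor weight changes by `h a - h b`. Supports stay finite along the way,
so all `finsum`s are honest finite sums and these changes may be added up.
-/

open Function

section Finsum

variable {α M : Type*} [DecidableEq α]

lemma Function.hasFiniteSupport_ite_eq [Zero M] (a : α) (c : M) :
    HasFiniteSupport fun x => if x = a then c else 0 :=
  (Set.finite_singleton a).subset <| support_subset_iff'.2 fun _ hx => if_neg hx

lemma finsum_add_ite_eq [AddCommMonoid M] {f : α → M} (hf : f.HasFiniteSupport) (a : α)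
    (c : M) :
    ∑ᶠ x, (f x + if x = a then c else 0) = ∑ᶠ x, f x + c := by
  rw [finsum_add_distrib hf (hasFiniteSupport_ite_eq a c),
    finsum_eq_single _ a fun x hxa => if_neg hxa, if_pos rfl]

end Finsum

section Routing

variable {α : Type*} [DecidableEq α]

lemma Function.HasFiniteSupport.tsub_ite_add_ite {σ : α → ℕ} (hσ : σ.HasFiniteSupport)
    (a b : α) :
    HasFiniteSupport fun y => σ y - (if y = a then 1 else 0) + (if y = b then 1 else 0) := by
  refine HasFiniteSupport.add (hσ.subset fun y hy => ?_) (hasFiniteSupport_ite_eq b 1)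
  simp only [mem_support, ne_eq] at hy ⊢
  omega

lemma finsum_natCast_tsub_ite_add_ite_mul {σ : α → ℕ} (hσ : σ.HasFiniteSupport) {a : α}
    (ha : 1 ≤ σ a) (b : α) (h : α → ℝ) :
    ∑ᶠ y, ((σ y - (if y = a then 1 else 0) + (if y = b then 1 else 0) : ℕ) : ℝ) * h y
      = ∑ᶠ y, (σ y : ℝ) * h y - h a + h b := by
  have hσh : HasFiniteSupport fun y => (σ y : ℝ) * h y :=
    (hσ.fun_comp Nat.cast_zero).mul_left h
  have hpt : ∀ y, ((σ y - (if y = a then 1 else 0) + (if y = b then 1 else 0) : ℕ) : ℝ) * h y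
      = ((σ y : ℝ) * h y + if y = a then -h a else 0) + if y = b then h b else 0 := by
    intro y
    rcases eq_or_ne y a with rfl | hya <;> rcases eq_or_ne y b with rfl | hyb <;>
      simp [*, Nat.cast_sub ha] <;> ring
  rw [finsum_congr hpt,
    finsum_add_ite_eq (f := fun y => (σ y : ℝ) * h y + if y = a then -h a else 0)
      (hσh.add (hasFiniteSupport_ite_eq a _)),
    finsum_add_ite_eq hσh, sub_eq_add_neg]

lemma finsum_apply_add_ite_eq {u : α → ℕ} (hu : u.HasFiniteSupport) {w : α → ℕ → ℝ}
    (hw0 : ∀ x, w x 0 = 0) (a : α) :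
    ∑ᶠ y, w y (u y + if y = a then 1 else 0)
      = ∑ᶠ y, w y (u y) + (w a (u a + 1) - w a (u a)) := by
  have hwu : HasFiniteSupport fun y => w y (u y) :=
    hu.subset fun y hy hu0 => hy (show w y (u y) = 0 by rw [hu0, hw0])
  rw [← finsum_add_ite_eq hwu a (w a (u a + 1) - w a (u a))]
  refine finsum_congr fun y => ?_
  rcases eq_or_ne y a with rfl | hya <;> simp [*]

end Routing

theorem rotor_weight_invariance_general
    {V : Type*} (G : SimpleGraph V) [G.LocallyFinite]
    [DecidableEq V]
    -- rotor sequences: `nbr x i` is the `i`-th neighbour of `x`, cyclically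
    (nbr : V → ℕ → V)
    (h : V → ℝ)
    -- the rotor weight function
    (w : V → ℕ → ℝ)
    (hw0 : ∀ x, w x 0 = 0)
    (hw : ∀ x k, w x (k + 1) = w x k + h x - h (nbr x ((k + 1) % G.degree x)))
    -- the routing dynamics: at time `t` the particle at `xseq t` makes one rotor step
    (xseq : ℕ → V) (σ : ℕ → V → ℕ) (u : ℕ → V → ℕ)
    (hσ0fin : (Function.support (σ 0)).Finite)
    (hu0 : ∀ x, u 0 x = 0)
    (hocc : ∀ t, 1 ≤ σ t (xseq t))
    (hσ : ∀ t y, σ (t + 1) y =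
        σ t y - (if y = xseq t then 1 else 0)
          + (if y = nbr (xseq t) ((u t (xseq t) + 1) % G.degree (xseq t)) then 1 else 0))
    (hu : ∀ t y, u (t + 1) y = u t y + if y = xseq t then 1 else 0) :
    ∀ t t' : ℕ,
      (∑ᶠ x, (σ t x : ℝ) * h x) + (∑ᶠ x, w x (u t x))
        = (∑ᶠ x, (σ t' x : ℝ) * h x) + (∑ᶠ x, w x (u t' x)) := by
  have hfin : ∀ t, (σ t).HasFiniteSupport ∧ (u t).HasFiniteSupport := by
    intro t
    induction t with
    | zero => exact ⟨hσ0fin, (funext hu0 : u 0 = 0) ▸ hasFiniteSupport_fun_zero⟩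
    | succ t ih =>
      simp only [funext (hσ t), funext (hu t)]
      exact ⟨ih.1.tsub_ite_add_ite _ _, ih.2.add (hasFiniteSupport_ite_eq _ 1)⟩
  set W : ℕ → ℝ := fun t => (∑ᶠ x, (σ t x : ℝ) * h x) + (∑ᶠ x, w x (u t x))
  have hstep : ∀ t, W (t + 1) = W t := by
    intro t
    simp only [W, hσ t, hu t, finsum_natCast_tsub_ite_add_ite_mul (hfin t).1 (hocc t),
      finsum_apply_add_ite_eq (hfin t).2 hw0, hw]
    ring
  have hconst : ∀ t, W t = W 0 := fun t => Nat.rec rfl (fun t ih => (hstep t).trans ih) t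
  exact fun t t' => (hconst t).trans (hconst t').symm

/-- Invariance of total weights under rotor-routing: if at each time step exactly one
particle makes one step of rotor-router walk, then the sum of particle weights
`W_P(t) = ∑_x σ_t(x)h(x)` and rotor weights `W_R(t) = ∑_x w(x, u_t(x))`, where
`w(x,0) = 0` and `w(x,k) = w(x,k-1) + h(x) - h(x_{k mod d(x)})`, is constant in time. -/
theorem rotor_weight_invariance
    {V : Type*} (G : SimpleGraph V) [DecidableRel G.Adj] [G.LocallyFinite]
    [DecidableEq V]
    -- rotor sequences: `nbr x i` is the `i`-th neighbour of `x`, cyclically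
    (nbr : V → ℕ → V)
    (hnbr_adj : ∀ x i, G.Adj x (nbr x i))
    (hnbr_period : ∀ x i, nbr x (i + G.degree x) = nbr x i)
    (h : V → ℝ)
    -- the rotor weight function
    (w : V → ℕ → ℝ)
    (hw0 : ∀ x, w x 0 = 0)
    (hw : ∀ x k, w x (k + 1) = w x k + h x - h (nbr x ((k + 1) % G.degree x)))
    -- the routing dynamics: at time `t` the particle at `xseq t` makes one rotor step
    (xseq : ℕ → V) (σ : ℕ → V → ℕ) (u : ℕ → V → ℕ)
    (hσ0fin : (Function.support (σ 0)).Finite)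
    (hu0 : ∀ x, u 0 x = 0)
    (hocc : ∀ t, 1 ≤ σ t (xseq t))
    (hσ : ∀ t y, σ (t + 1) y =
        σ t y - (if y = xseq t then 1 else 0)
          + (if y = nbr (xseq t) ((u t (xseq t) + 1) % G.degree (xseq t)) then 1 else 0))
    (hu : ∀ t y, u (t + 1) y = u t y + if y = xseq t then 1 else 0) :
    ∀ t t' : ℕ,
      (∑ᶠ x, (σ t x : ℝ) * h x) + (∑ᶠ x, w x (u t x))
        = (∑ᶠ x, (σ t' x : ℝ) * h x) + (∑ᶠ x, w x (u t' x)) :=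
  rotor_weight_invariance_general G nbr h w hw0 hw xseq σ u hσ0fin hu0 hocc hσ hu
end

section
/- Generating function identities on the comb: for simple random walk on the comb lattice C₂, the Green generating function satisfies G(o,o|z) = √2 / √(1 - z² + √(1-z²)) for 0 < z < 1, and G((x₁,x₂), o | z) = F₁(z)^{|x₂|} F₂(z)^{|x₁|} G(o,o|z), where F₁(z) = (1 - √(1-z²))/z and F₂(z) = (1 + √(1-z²) - √2·√(1-z² + √(1-z²)))/z. -/
/-- Neighbours of a vertex of the comb lattice `C₂`: vertical neighbours everywhere,
plus horizontal neighbours along the backbone `y = 0`. -/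
def combNbrs (p : ℤ × ℤ) : Finset (ℤ × ℤ) :=
  if p.2 = 0 then {(p.1 + 1, 0), (p.1 - 1, 0), (p.1, 1), (p.1, -1)}
  else {(p.1, p.2 + 1), (p.1, p.2 - 1)}

/-- `t`-step transition probabilities `P_x[X_t = y]` of simple random walk on the comb. -/
noncomputable def combProb : ℕ → ℤ × ℤ → ℤ × ℤ → ℝ
  | 0, x, y => if x = y then 1 else 0
  | t + 1, x, y => (1 / ((combNbrs x).card : ℝ)) * ∑ w ∈ combNbrs x, combProb t w y

/-- The Green generating function `G(x,y|z) = ∑_{t≥0} P_x[X_t = y] zᵗ`. -/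
noncomputable def combGreenGF (x y : ℤ × ℤ) (z : ℝ) : ℝ :=
  ∑' t : ℕ, combProb t x y * z ^ t

/-- `F₁(z) = (1 - √(1-z²))/z`. -/
noncomputable def F1 (z : ℝ) : ℝ := (1 - Real.sqrt (1 - z ^ 2)) / z

/-- `F₂(z) = (1 + √(1-z²) - √2·√(1-z² + √(1-z²)))/z`. -/
noncomputable def F2 (z : ℝ) : ℝ :=
  (1 + Real.sqrt (1 - z ^ 2) - Real.sqrt 2 * Real.sqrt (1 - z ^ 2 + Real.sqrt (1 - z ^ 2))) / z

/-!
Let `P = nbrAverage combNbrs` be the transition operator of the walk. For `|z| < 1` the function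
`x ↦ G(x,o|z)` is a bounded solution of `h = δ_o + z P h` (one-step decomposition), and a bounded
solution is unique because `z P` shrinks the sup norm by the factor `|z|`. The closed form
`F₁^{|x₂|} F₂^{|x₁|} C`, with `C = combGreenOrigin z`, solves the same equation: on a tooth this
is the quadratic `z (1 + F₁²) = 2 F₁`, on the backbone away from `o` the quadratic
`z (1 + F₂² + 2 F₁ F₂) = 4 F₂`, and at `o` the normalisation `C (1 - z (F₁ + F₂) / 2) = 1`.
-/

open Finset

noncomputable def nbrAverage {α : Type*} (N : α → Finset α) (f : α → ℝ) (x : α) : ℝ :=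
  1 / #(N x) * ∑ w ∈ N x, f w

section nbrAverage

variable {α : Type*} (N : α → Finset α)

theorem nbrAverage_sub (f g : α → ℝ) (x : α) :
    nbrAverage N (f - g) x = nbrAverage N f x - nbrAverage N g x := by
  simp only [nbrAverage, Pi.sub_apply, sum_sub_distrib, mul_sub]

theorem abs_nbrAverage_le {f : α → ℝ} {M : ℝ} (hM : 0 ≤ M) (x : α)
    (hf : ∀ w ∈ N x, |f w| ≤ M) : |nbrAverage N f x| ≤ M := by
  rcases (N x).eq_empty_or_nonempty with hempty | hne
  · simpa [nbrAverage, hempty] using hM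
  have hcard : (0 : ℝ) < #(N x) := by exact_mod_cast hne.card_pos
  calc |nbrAverage N f x| ≤ 1 / #(N x) * ∑ w ∈ N x, |f w| := by
        rw [nbrAverage, abs_mul, abs_of_pos (one_div_pos.2 hcard)]
        gcongr
        exact abs_sum_le_sum_abs _ _
    _ ≤ 1 / #(N x) * (#(N x) * M) := by
        gcongr
        simpa using sum_le_sum hf
    _ = M := by field_simp

theorem tsum_nbrAverage {ι : Type*} {f : ι → α → ℝ} (hf : ∀ w, Summable fun i => f i w) (x : α) :
    ∑' i, nbrAverage N (f i) x = nbrAverage N (fun w => ∑' i, f i w) x := by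
  simp only [nbrAverage]
  rw [tsum_mul_left, Summable.tsum_finsetSum fun w _ => hf w]

theorem eq_zero_of_eq_mul_nbrAverage {h : α → ℝ} {z : ℝ} (hz : |z| < 1) (hbdd : ∃ M, ∀ x, |h x| ≤ M)
    (hrec : ∀ x, h x = z * nbrAverage N h x) : h = 0 := by
  obtain ⟨M, hM⟩ := hbdd
  have hdecay : ∀ n : ℕ, ∀ x, |h x| ≤ |z| ^ n * M := by
    intro n
    induction n with
    | zero => simpa using hM
    | succ n ih =>
      intro x
      have hzM : 0 ≤ |z| ^ n * M := (abs_nonneg _).trans (ih x)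
      rw [hrec x, abs_mul, pow_succ', mul_assoc]
      gcongr
      exact abs_nbrAverage_le N hzM x fun w _ => ih w
  have hlim : Filter.Tendsto (fun n : ℕ => |z| ^ n * M) Filter.atTop (nhds 0) := by
    simpa using (tendsto_pow_atTop_nhds_zero_of_lt_one (abs_nonneg z) hz).mul_const M
  funext x
  exact abs_nonpos_iff.1 (ge_of_tendsto' hlim fun n => hdecay n x)

end nbrAverage

theorem pow_natAbs_of_ne_zero {R : Type*} [Monoid R] (r : R) {a : ℤ} (ha : a ≠ 0) :
    r ^ a.natAbs = r ^ (a.natAbs - 1) * r := by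
  rw [← pow_succ, Nat.sub_add_cancel (Int.natAbs_pos.2 ha)]

theorem pow_natAbs_add_one_add_pow_natAbs_sub_one {R : Type*} [Semiring R] (r : R) {a : ℤ}
    (ha : a ≠ 0) :
    r ^ (a + 1).natAbs + r ^ (a - 1).natAbs = r ^ (a.natAbs - 1) * (1 + r ^ 2) := by
  rw [mul_add, mul_one, ← pow_add]
  rcases lt_or_gt_of_ne ha with hneg | hpos
  · rw [show (a + 1).natAbs = a.natAbs - 1 by omega,
      show (a - 1).natAbs = a.natAbs - 1 + 2 by omega]
  · rw [show (a + 1).natAbs = a.natAbs - 1 + 2 by omega,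
      show (a - 1).natAbs = a.natAbs - 1 by omega, add_comm]

theorem sum_combNbrs_mk_zero (f : ℤ × ℤ → ℝ) (a : ℤ) :
    ∑ w ∈ combNbrs (a, 0), f w = f (a + 1, 0) + f (a - 1, 0) + f (a, 1) + f (a, -1) := by
  rw [combNbrs, if_pos rfl, sum_insert (by simp; omega), sum_insert (by simp [Prod.ext_iff]),
    sum_pair (by simp [Prod.ext_iff])]
  ring

theorem card_combNbrs_mk_zero (a : ℤ) : #(combNbrs (a, 0)) = 4 := by
  have h := sum_combNbrs_mk_zero (fun _ => 1) a
  norm_num at h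
  exact_mod_cast h

theorem sum_combNbrs_mk_of_ne_zero (f : ℤ × ℤ → ℝ) (a : ℤ) {b : ℤ} (hb : b ≠ 0) :
    ∑ w ∈ combNbrs (a, b), f w = f (a, b + 1) + f (a, b - 1) := by
  rw [combNbrs, if_neg hb, sum_pair (by simp; omega)]

theorem card_combNbrs_mk_of_ne_zero (a : ℤ) {b : ℤ} (hb : b ≠ 0) : #(combNbrs (a, b)) = 2 := by
  have h := sum_combNbrs_mk_of_ne_zero (fun _ => 1) a hb
  norm_num at h
  exact_mod_cast h

theorem combProb_succ (t : ℕ) (x y : ℤ × ℤ) :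
    combProb (t + 1) x y = nbrAverage combNbrs (fun w => combProb t w y) x :=
  rfl

theorem abs_combProb_le_one (t : ℕ) (x y : ℤ × ℤ) : |combProb t x y| ≤ 1 := by
  induction t generalizing x with
  | zero => simp only [combProb]; split_ifs <;> norm_num
  | succ t ih => exact abs_nbrAverage_le combNbrs zero_le_one x fun w _ => ih w

theorem norm_combProb_mul_pow_le (t : ℕ) (x y : ℤ × ℤ) (z : ℝ) :
    ‖combProb t x y * z ^ t‖ ≤ |z| ^ t := by
  rw [Real.norm_eq_abs, abs_mul, abs_pow]
  exact mul_le_of_le_one_left (by positivity) (abs_combProb_le_one t x y)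

section GreenFunction

variable {z : ℝ} (hz : |z| < 1)
include hz

theorem summable_combProb_mul_pow (x y : ℤ × ℤ) :
    Summable fun t => combProb t x y * z ^ t :=
  .of_norm_bounded (summable_geometric_of_lt_one (abs_nonneg z) hz)
    fun t => norm_combProb_mul_pow_le t x y z

theorem abs_combGreenGF_le (x y : ℤ × ℤ) : |combGreenGF x y z| ≤ (1 - |z|)⁻¹ :=
  tsum_of_norm_bounded (hasSum_geometric_of_lt_one (abs_nonneg z) hz)
    fun t => norm_combProb_mul_pow_le t x y z

theorem combGreenGF_eq (x y : ℤ × ℤ) :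
    combGreenGF x y z
      = (if x = y then 1 else 0) + z * nbrAverage combNbrs (fun w => combGreenGF w y z) x := by
  have hshift : ∀ t, combProb (t + 1) x y * z ^ (t + 1)
      = z * nbrAverage combNbrs (fun w => combProb t w y * z ^ t) x := by
    intro t
    simp only [combProb_succ, nbrAverage, mul_sum, sum_mul, pow_succ]
    exact sum_congr rfl fun w _ => by ring
  rw [combGreenGF, (summable_combProb_mul_pow hz x y).tsum_eq_zero_add]
  simp only [hshift, tsum_mul_left]
  rw [tsum_nbrAverage combNbrs (fun w => summable_combProb_mul_pow hz w y)]
  simp [combProb, combGreenGF]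

end GreenFunction

noncomputable def combGreenOrigin (z : ℝ) : ℝ :=
  √2 / √(1 - z ^ 2 + √(1 - z ^ 2))

noncomputable def combGreenClosedForm (z : ℝ) (x : ℤ × ℤ) : ℝ :=
  F1 z ^ x.2.natAbs * F2 z ^ x.1.natAbs * combGreenOrigin z

section ClosedForm

variable {z : ℝ}

theorem sq_sqrt_one_sub_sq (hz1 : z ^ 2 ≤ 1) : √(1 - z ^ 2) ^ 2 = 1 - z ^ 2 :=
  Real.sq_sqrt (by linarith)

theorem sq_sqrt_two_mul_sqrt (hz1 : z ^ 2 ≤ 1) :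
    (√2 * √(1 - z ^ 2 + √(1 - z ^ 2))) ^ 2 = 2 * (1 - z ^ 2) + 2 * √(1 - z ^ 2) := by
  rw [mul_pow, Real.sq_sqrt zero_le_two, Real.sq_sqrt (by positivity [sub_nonneg.2 hz1])]
  ring

theorem F1_quadratic (hz : z ≠ 0) (hz1 : z ^ 2 ≤ 1) : z * (1 + F1 z ^ 2) = 2 * F1 z := by
  rw [F1]
  field_simp
  linear_combination sq_sqrt_one_sub_sq hz1

theorem F2_quadratic (hz : z ≠ 0) (hz1 : z ^ 2 ≤ 1) :
    z * (1 + F2 z ^ 2 + 2 * F1 z * F2 z) = 4 * F2 z := by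
  rw [F1, F2]
  field_simp
  linear_combination sq_sqrt_two_mul_sqrt hz1 - sq_sqrt_one_sub_sq hz1

theorem combGreenOrigin_mul (hz : z ≠ 0) (hz1 : z ^ 2 < 1) :
    combGreenOrigin z * (1 - z * (F1 z + F2 z) / 2) = 1 := by
  have hA : 0 < √(1 - z ^ 2 + √(1 - z ^ 2)) := Real.sqrt_pos.2 (by positivity [sub_pos.2 hz1])
  rw [combGreenOrigin, F1, F2]
  field_simp
  linear_combination √(1 - z ^ 2 + √(1 - z ^ 2)) * Real.mul_self_sqrt zero_le_two

theorem F1_mem_Icc (hz0 : 0 < z) (hz1 : z < 1) : F1 z ∈ Set.Icc 0 1 := by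
  have hs := sq_sqrt_one_sub_sq (z := z) (by nlinarith)
  have hs0 := Real.sqrt_nonneg (1 - z ^ 2)
  rw [F1, Set.mem_Icc, div_le_one hz0]
  constructor
  · exact div_nonneg (by nlinarith) hz0.le
  · nlinarith

theorem F2_mem_Icc (hz0 : 0 < z) (hz1 : z < 1) : F2 z ∈ Set.Icc 0 1 := by
  have hs := sq_sqrt_one_sub_sq (z := z) (by nlinarith)
  have hs0 := Real.sqrt_nonneg (1 - z ^ 2)
  have hB := sq_sqrt_two_mul_sqrt (z := z) (by nlinarith)
  have hB0 : 0 ≤ √2 * √(1 - z ^ 2 + √(1 - z ^ 2)) := by positivity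
  rw [F2, Set.mem_Icc, div_le_one hz0]
  constructor
  · exact div_nonneg (by nlinarith) hz0.le
  · nlinarith

theorem abs_combGreenClosedForm_le (hz0 : 0 < z) (hz1 : z < 1) (x : ℤ × ℤ) :
    |combGreenClosedForm z x| ≤ combGreenOrigin z := by
  obtain ⟨hF1, hF1'⟩ := F1_mem_Icc hz0 hz1
  obtain ⟨hF2, hF2'⟩ := F2_mem_Icc hz0 hz1
  have hC : 0 ≤ combGreenOrigin z := by unfold combGreenOrigin; positivity
  rw [combGreenClosedForm, abs_of_nonneg (by positivity)]
  exact mul_le_of_le_one_left hC (mul_le_one₀ (pow_le_one₀ hF1 hF1') (by positivity)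
    (pow_le_one₀ hF2 hF2'))

theorem combGreenClosedForm_eq (hz : z ≠ 0) (hz1 : z ^ 2 < 1) (x : ℤ × ℤ) :
    combGreenClosedForm z x
      = (if x = (0, 0) then 1 else 0) + z * nbrAverage combNbrs (combGreenClosedForm z) x := by
  obtain ⟨a, b⟩ := x
  set C := combGreenOrigin z
  simp only [nbrAverage, combGreenClosedForm]
  by_cases hb : b = 0
  · subst hb
    rw [sum_combNbrs_mk_zero, card_combNbrs_mk_zero]
    by_cases ha : a = 0
    · subst ha
      norm_num
      linear_combination combGreenOrigin_mul hz hz1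
    · have hpow := pow_natAbs_add_one_add_pow_natAbs_sub_one (F2 z) ha
      have hpow' := pow_natAbs_of_ne_zero (F2 z) ha
      rw [if_neg (by simp [ha])]
      norm_num
      linear_combination (1 - z * F1 z / 2) * C * hpow' - (z / 4 * C) * hpow
        - (F2 z ^ (a.natAbs - 1) * C / 4) * F2_quadratic hz hz1.le
  · have hpow := pow_natAbs_add_one_add_pow_natAbs_sub_one (F1 z) hb
    have hpow' := pow_natAbs_of_ne_zero (F1 z) hb
    rw [sum_combNbrs_mk_of_ne_zero _ _ hb, card_combNbrs_mk_of_ne_zero _ hb, if_neg (by simp [hb])]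
    norm_num
    linear_combination (F2 z ^ a.natAbs * C) * hpow' - (z / 2 * F2 z ^ a.natAbs * C) * hpow
      - (F1 z ^ (b.natAbs - 1) * F2 z ^ a.natAbs * C / 2) * F1_quadratic hz hz1.le

end ClosedForm

theorem combGreenGF_eq_combGreenClosedForm {z : ℝ} (hz0 : 0 < z) (hz1 : z < 1) (x : ℤ × ℤ) :
    combGreenGF x (0, 0) z = combGreenClosedForm z x := by
  have hz : |z| < 1 := by rwa [abs_of_pos hz0]
  set h : ℤ × ℤ → ℝ := (combGreenGF · (0, 0) z) - combGreenClosedForm z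
  have hbdd : ∀ x, |h x| ≤ (1 - |z|)⁻¹ + combGreenOrigin z := fun x =>
    (abs_sub _ _).trans <|
      add_le_add (abs_combGreenGF_le hz x _) (abs_combGreenClosedForm_le hz0 hz1 x)
  have hrec : ∀ x, h x = z * nbrAverage combNbrs h x := fun x => by
    rw [nbrAverage_sub, mul_sub]
    simp only [h, Pi.sub_apply]
    rw [combGreenGF_eq hz, combGreenClosedForm_eq hz0.ne' (by nlinarith)]
    ring
  exact sub_eq_zero.1 (congrFun (eq_zero_of_eq_mul_nbrAverage combNbrs hz ⟨_, hbdd⟩ hrec) x)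

/-- Generating function identities for simple random walk on the comb `C₂`:
`G(o,o|z) = √2/√(1-z²+√(1-z²))` and
`G((x₁,x₂),o|z) = F₁(z)^{|x₂|}·F₂(z)^{|x₁|}·G(o,o|z)` for `0 < z < 1`. -/
theorem comb_green_generating_function (z : ℝ) (hz0 : 0 < z) (hz1 : z < 1) :
    combGreenGF (0, 0) (0, 0) z
        = Real.sqrt 2 / Real.sqrt (1 - z ^ 2 + Real.sqrt (1 - z ^ 2)) ∧
    ∀ x : ℤ × ℤ, combGreenGF x (0, 0) z
        = F1 z ^ x.2.natAbs * F2 z ^ x.1.natAbs * combGreenGF (0, 0) (0, 0) z := by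
  have hG := combGreenGF_eq_combGreenClosedForm hz0 hz1
  have hO : combGreenGF (0, 0) (0, 0) z = combGreenOrigin z := by
    simp [hG, combGreenClosedForm]
  exact ⟨hO, fun x => by rw [hG, hO, combGreenClosedForm]⟩
end

section
/- The potential kernel on the comb is linear in the backbone coordinate: for the simple random walk on the comb C₂, with A(x,o|z) = G(o,o|z)(1 - F₁(z)^{|x₂|}F₂(z)^{|x₁|}) as above, lim_{z→1⁻} A(x,o|z) = 2|x₁| for every x = (x₁,x₂) ∈ C₂. -/
open Filter

/-- `G(o,o|z) = √2/√(1-z²+√(1-z²))` on the comb. -/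
noncomputable def Goo (z : ℝ) : ℝ :=
  Real.sqrt 2 / Real.sqrt (1 - z ^ 2 + Real.sqrt (1 - z ^ 2))

/-- The generating function of the potential kernel on the comb,
`A(x,o|z) = G(o,o|z)(1 - F₁(z)^{|x₂|}F₂(z)^{|x₁|})`. -/
noncomputable def potKernelGF (x : ℤ × ℤ) (z : ℝ) : ℝ :=
  Goo z * (1 - F1 z ^ x.2.natAbs * F2 z ^ x.1.natAbs)

open Topology

/-! In the variable `t = (1 - z²)^{1/4}`, which tends to `0⁺` as `z → 1⁻`, one has
`G(o,o|z) = √2 / (t √(t² + 1))`, while `F₁` and `F₂` become functions of `t` that are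
differentiable at `0`, with value `1` there and derivatives `0` and `-√2`. Hence
`A(x,o|z) = √2 / √(t² + 1) · (1 - F₁^{|x₂|} F₂^{|x₁|}) / t`, and the difference quotient tends to
minus the derivative of `F₁^{|x₂|} F₂^{|x₁|}` at `0`, namely `√2 |x₁|`; the limit is `2 |x₁|`. -/

section DerivAtOne

variable {𝕜 : Type*} [NontriviallyNormedField 𝕜] {f g : 𝕜 → 𝕜} {a b x : 𝕜}

theorem HasDerivAt.pow_mul_pow_of_eq_one (hf : HasDerivAt f a x) (hg : HasDerivAt g b x)
    (hf1 : f x = 1) (hg1 : g x = 1) (m n : ℕ) :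
    HasDerivAt (fun t => f t ^ m * g t ^ n) (m * a + n * b) x :=
  ((hf.fun_pow m).fun_mul (hg.fun_pow n)).congr_deriv (by simp [hf1, hg1])

theorem HasDerivAt.tendsto_inv_mul_one_sub (hf : HasDerivAt f a 0) (hf1 : f 0 = 1) :
    Tendsto (fun t => t⁻¹ * (1 - f t)) (𝓝[≠] 0) (𝓝 (-a)) := by
  convert (hasDerivAt_iff_tendsto_slope_zero.mp hf).neg using 2 with t
  simp [hf1, ← mul_neg]

end DerivAtOne

noncomputable def F1t (t : ℝ) : ℝ := (1 - t ^ 2) / √(1 - t ^ 4)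

noncomputable def F2t (t : ℝ) : ℝ := (1 + t ^ 2 - √2 * t * √(t ^ 2 + 1)) / √(1 - t ^ 4)

theorem hasDerivAt_sqrt_one_sub_pow_four : HasDerivAt (fun t : ℝ => √(1 - t ^ 4)) 0 0 := by
  simpa using ((hasDerivAt_pow 4 (0 : ℝ)).const_sub 1).sqrt (by norm_num)

theorem hasDerivAt_F1t_zero : HasDerivAt F1t 0 0 := by
  unfold F1t
  exact (((hasDerivAt_pow 2 (0 : ℝ)).const_sub 1).fun_div
    hasDerivAt_sqrt_one_sub_pow_four (by norm_num)).congr_deriv (by simp)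

theorem hasDerivAt_F2t_zero : HasDerivAt F2t (-√2) 0 := by
  have hroot : HasDerivAt (fun t : ℝ => √(t ^ 2 + 1)) 0 0 := by
    simpa using ((hasDerivAt_pow 2 (0 : ℝ)).add_const 1).sqrt (by norm_num)
  have hnum : HasDerivAt (fun t : ℝ => 1 + t ^ 2 - √2 * t * √(t ^ 2 + 1)) (-√2) 0 := by
    simpa using ((hasDerivAt_pow 2 (0 : ℝ)).const_add 1).fun_sub
      (((hasDerivAt_id (0 : ℝ)).const_mul √2).fun_mul hroot)
  unfold F2t
  exact (hnum.fun_div hasDerivAt_sqrt_one_sub_pow_four (by norm_num)).congr_deriv (by simp)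

@[simp] theorem F1t_zero : F1t 0 = 1 := by simp [F1t]

@[simp] theorem F2t_zero : F2t 0 = 1 := by simp [F2t]

section Substitution

variable {t z : ℝ}

theorem sqrt_one_sub_sq_of_pow_four_add_sq (htz : t ^ 4 + z ^ 2 = 1) : √(1 - z ^ 2) = t ^ 2 := by
  rw [show 1 - z ^ 2 = (t ^ 2) ^ 2 by linear_combination -htz, Real.sqrt_sq (by positivity)]

theorem sqrt_one_sub_pow_four_of_pow_four_add_sq (hz : 0 ≤ z) (htz : t ^ 4 + z ^ 2 = 1) :
    √(1 - t ^ 4) = z := by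
  rw [show 1 - t ^ 4 = z ^ 2 by linear_combination -htz, Real.sqrt_sq hz]

theorem sqrt_one_sub_sq_add_sqrt_of_pow_four_add_sq (ht : 0 ≤ t) (htz : t ^ 4 + z ^ 2 = 1) :
    √(1 - z ^ 2 + √(1 - z ^ 2)) = t * √(t ^ 2 + 1) := by
  rw [sqrt_one_sub_sq_of_pow_four_add_sq htz,
    show 1 - z ^ 2 + t ^ 2 = t ^ 2 * (t ^ 2 + 1) by linear_combination -htz,
    Real.sqrt_mul (sq_nonneg t), Real.sqrt_sq ht]

theorem F1_eq_F1t (hz : 0 ≤ z) (htz : t ^ 4 + z ^ 2 = 1) : F1 z = F1t t := by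
  rw [F1, F1t, sqrt_one_sub_sq_of_pow_four_add_sq htz,
    sqrt_one_sub_pow_four_of_pow_four_add_sq hz htz]

theorem F2_eq_F2t (ht : 0 ≤ t) (hz : 0 ≤ z) (htz : t ^ 4 + z ^ 2 = 1) : F2 z = F2t t := by
  rw [F2, F2t, sqrt_one_sub_sq_add_sqrt_of_pow_four_add_sq ht htz,
    sqrt_one_sub_sq_of_pow_four_add_sq htz, sqrt_one_sub_pow_four_of_pow_four_add_sq hz htz,
    mul_assoc]

theorem Goo_eq_of_pow_four_add_sq (ht : 0 ≤ t) (htz : t ^ 4 + z ^ 2 = 1) :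
    Goo z = √2 / √(t ^ 2 + 1) * t⁻¹ := by
  rw [Goo, sqrt_one_sub_sq_add_sqrt_of_pow_four_add_sq ht htz, mul_comm, ← div_div, div_eq_mul_inv]

theorem potKernelGF_eq_of_pow_four_add_sq (x : ℤ × ℤ) (ht : 0 ≤ t) (hz : 0 ≤ z)
    (htz : t ^ 4 + z ^ 2 = 1) :
    potKernelGF x z =
      √2 / √(t ^ 2 + 1) * (t⁻¹ * (1 - F1t t ^ x.2.natAbs * F2t t ^ x.1.natAbs)) := by
  rw [potKernelGF, Goo_eq_of_pow_four_add_sq ht htz, F1_eq_F1t hz htz, F2_eq_F2t ht hz htz,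
    mul_assoc]

end Substitution

theorem tendsto_sqrt_sqrt_one_sub_sq_nhdsLT_one :
    Tendsto (fun z : ℝ => √√(1 - z ^ 2)) (𝓝[<] 1) (𝓝[≠] 0) := by
  refine tendsto_nhdsWithin_iff.mpr ⟨?_, ?_⟩
  · have hcont : ContinuousAt (fun z : ℝ => √√(1 - z ^ 2)) 1 := by fun_prop
    simpa using hcont.tendsto.mono_left nhdsWithin_le_nhds
  · filter_upwards [Ioo_mem_nhdsLT (zero_lt_one' ℝ)] with z hz
    have : 0 < 1 - z ^ 2 := by nlinarith [hz.1, hz.2]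
    exact (Real.sqrt_pos.mpr (Real.sqrt_pos.mpr this)).ne'

/-- The potential kernel on the comb is linear in the backbone coordinate:
`lim_{z→1⁻} A(x,o|z) = 2|x₁|` for every `x = (x₁,x₂)`. -/
theorem comb_potential_kernel_limit (x : ℤ × ℤ) :
    Tendsto (fun z : ℝ => potKernelGF x z) (nhdsWithin 1 (Set.Iio 1))
      (nhds (2 * |(x.1 : ℝ)|)) := by
  have hG : Tendsto (fun t : ℝ => √2 / √(t ^ 2 + 1)) (𝓝[≠] 0) (𝓝 √2) := by
    have hcont : ContinuousAt (fun t : ℝ => √2 / √(t ^ 2 + 1)) 0 :=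
      ContinuousAt.div (by fun_prop) (by fun_prop) (by simp)
    simpa using hcont.tendsto.mono_left nhdsWithin_le_nhds
  have hslope := (hasDerivAt_F1t_zero.pow_mul_pow_of_eq_one hasDerivAt_F2t_zero F1t_zero F2t_zero
    x.2.natAbs x.1.natAbs).tendsto_inv_mul_one_sub (by simp)
  have hlim := (hG.mul hslope).comp tendsto_sqrt_sqrt_one_sub_sq_nhdsLT_one
  have hval : √2 * -(x.2.natAbs * 0 + x.1.natAbs * -√2) = 2 * |(x.1 : ℝ)| := by
    simp only [Nat.cast_natAbs, Int.cast_abs]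
    linear_combination |(x.1 : ℝ)| * Real.mul_self_sqrt (zero_le_two (α := ℝ))
  rw [← hval]
  refine hlim.congr' ?_
  filter_upwards [Ioo_mem_nhdsLT (zero_lt_one' ℝ)] with z hz
  have htz : √√(1 - z ^ 2) ^ 4 + z ^ 2 = 1 := by
    rw [show (4 : ℕ) = 2 * 2 from rfl, pow_mul, Real.sq_sqrt (Real.sqrt_nonneg _),
      Real.sq_sqrt (by nlinarith [hz.1, hz.2])]
    ring
  exact (potKernelGF_eq_of_pow_four_add_sq x (Real.sqrt_nonneg _) hz.1.le htz).symm
end
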